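/- arXiv:2507.08261 — 2 statements merged into one kernel-verified Lean document; each statement's English description precedes it below -/
import Mathlib

section
/- Let p ≥ 2, α > 0, and let X₁, …, X_p be independent real random variables with X_i ~ Gamma(α, β_i) (shape α, scale β_i > 0). Define the naive estimator β̂_i⁰ = X_i/(α+1) and, for a constant c, the shrinkage estimator β̂_i^JS = β̂_i⁰ + cV where V = (∏_{j=1}^p X_j)^{1/p}. If c ∈ [0, 2(p−1)/((α+1)(αp+1))], then for every β ∈ ℝ₊^p the shrinkage estimator dominates the naive estimator in total mean squared risk: E[Σ_{i=1}^p (β̂_i^JS − β_i)²] ≤ E[Σ_{i=1}^p (β̂_i⁰ − β_i)²]. -/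
/-!
Write `V = (∏ j, X j) ^ (1 / p)`. Expanding the squares, the shrinkage changes the risk by
`∑ i, (2c (E[V X_i] / (α + 1) - β_i E[V]) + c² E[V²])`, all terms being integrable since the
`X_i` are in `L²` and `V` is at most their arithmetic mean. By independence the moments of `V`
factor into Gamma moments `E[X^s] = β^s Γ(α + s) / Γ(α)`, and `Γ(x + 1) = x Γ(x)` gives
`E[V X_i] = β_i (α + 1/p) E[V]`, so the linear term is `-2c (p - 1) / (p (α + 1)) · E[V] · ∑ β_i`.
The quadratic term is controlled by `p² E[V²] ≤ (α p + 1) (∑ β_i) E[V]`, which combines AM-GM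
for the `β_i` with Wendel's inequality `Γ(x + s) ≤ x^s Γ(x)` (`0 ≤ s ≤ 1`), a consequence of the
log-convexity of `Γ`. The bound on `c` is exactly what makes the total nonpositive.
-/

open MeasureTheory ProbabilityTheory Real Set

theorem Real.Gamma_add_le_mul_rpow {x s : ℝ} (hx : 0 < x) (hs0 : 0 ≤ s) (hs1 : s ≤ 1) :
    Gamma (x + s) ≤ Gamma x * x ^ s := by
  rcases hs0.eq_or_lt with rfl | hs0
  · simp
  rcases hs1.eq_or_lt with rfl | hs1
  · rw [Gamma_add_one hx.ne', rpow_one, mul_comm]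
  have h := Gamma_mul_add_mul_le_rpow_Gamma_mul_rpow_Gamma hx (by linarith : 0 < x + 1)
    (sub_pos.2 hs1) hs0 (sub_add_cancel 1 s)
  rw [show (1 - s) * x + s * (x + 1) = x + s by ring, Gamma_add_one hx.ne',
    mul_rpow hx.le (Gamma_pos_of_pos hx).le, mul_left_comm, ← rpow_add (Gamma_pos_of_pos hx),
    sub_add_cancel, rpow_one] at h
  exact h.trans_eq (mul_comm _ _)

theorem Real.natCast_mul_Gamma_add_two_div_pow_le {α : ℝ} (hα : 0 < α) {n : ℕ} (hn : 1 ≤ n) :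
    n * (Gamma (α + 2 / n) / Gamma α) ^ n ≤ (α * n + 1) * (Gamma (α + 1 / n) / Gamma α) ^ n := by
  have hn' : (1 : ℝ) ≤ n := Nat.one_le_cast.2 hn
  have hq : 0 < α + 1 / n := by positivity
  have hΓ : Gamma (α + 2 / n) ≤ Gamma (α + 1 / n) * (α + 1 / n) ^ ((1 : ℝ) / n) := by
    rw [show α + 2 / n = (α + 1 / n) + 1 / n by ring]
    exact Gamma_add_le_mul_rpow hq (by positivity) ((div_le_one (by positivity)).2 hn')
  have hpow : Gamma (α + 2 / n) ^ n ≤ Gamma (α + 1 / n) ^ n * (α + 1 / n) := by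
    calc Gamma (α + 2 / n) ^ n ≤ (Gamma (α + 1 / n) * (α + 1 / n) ^ ((1 : ℝ) / n)) ^ n :=
          pow_le_pow_left₀ (Gamma_pos_of_pos (by positivity)).le hΓ n
      _ = Gamma (α + 1 / n) ^ n * (α + 1 / n) := by
          rw [mul_pow, ← rpow_natCast ((α + 1 / n) ^ _), ← rpow_mul hq.le,
            one_div_mul_cancel (by positivity), rpow_one]
  rw [div_pow, div_pow, ← mul_div_assoc, ← mul_div_assoc]
  refine div_le_div_of_nonneg_right ?_ (by positivity)
  calc (n : ℝ) * Gamma (α + 2 / n) ^ n ≤ n * (Gamma (α + 1 / n) ^ n * (α + 1 / n)) := by gcongr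
    _ = (α * n + 1) * Gamma (α + 1 / n) ^ n := by field_simp

theorem Real.prod_rpow_one_div_card_le {ι : Type*} [Fintype ι] [Nonempty ι] {x : ι → ℝ}
    (hx : ∀ i, 0 ≤ x i) :
    (∏ i, x i) ^ ((1 : ℝ) / Fintype.card ι) ≤ (∑ i, x i) / Fintype.card ι := by
  simpa using Real.geom_mean_le_arith_mean Finset.univ (fun _ => 1) x (fun _ _ => zero_le_one)
    (by simpa using Fintype.card_pos) (fun i _ => hx i)

theorem prod_apply_add_ite_eq_mul {ι M : Type*} [Fintype ι] [DecidableEq ι] [CommMonoid M]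
    {f : ι → ℝ → M} {t : ℝ} {i : ι} {k : M} (h : f i (t + 1) = k * f i t) :
    ∏ j, f j (t + if j = i then 1 else 0) = k * ∏ j, f j t := by
  rw [← Finset.mul_prod_erase _ _ (Finset.mem_univ i),
    ← Finset.mul_prod_erase _ (fun j => f j t) (Finset.mem_univ i), if_pos rfl, h, mul_assoc]
  congr 2
  exact Finset.prod_congr rfl fun j hj => by rw [if_neg (Finset.ne_of_mem_erase hj), add_zero]

/-- The `s`-th moment of `gammaMeasure α (1 / β)`, the Gamma law with shape `α` and scale `β`. -/
noncomputable def gammaMoment (α β s : ℝ) : ℝ := β ^ s * (Gamma (α + s) / Gamma α)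

lemma gammaMoment_add_one {α β s : ℝ} (hβ : β ≠ 0) (hs : α + s ≠ 0) :
    gammaMoment α β (s + 1) = β * (α + s) * gammaMoment α β s := by
  rw [gammaMoment, gammaMoment, rpow_add_one hβ, ← add_assoc, Gamma_add_one hs]
  ring

lemma prod_gammaMoment {ι : Type*} [Fintype ι] {β : ι → ℝ} (hβ : ∀ i, 0 ≤ β i) (α s : ℝ) :
    ∏ i, gammaMoment α (β i) s
      = (∏ i, β i) ^ s * (Gamma (α + s) / Gamma α) ^ Fintype.card ι := by
  rw [← finsetProd_rpow _ _ fun i _ => hβ i, ← Finset.card_univ, ← Finset.prod_const,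
    ← Finset.prod_mul_distrib]
  rfl

lemma natCast_sq_mul_prod_gammaMoment_le {ι : Type*} [Fintype ι] [Nonempty ι] {α : ℝ}
    (hα : 0 < α) {β : ι → ℝ} (hβ : ∀ i, 0 ≤ β i) :
    (Fintype.card ι : ℝ) ^ 2 * ∏ i, gammaMoment α (β i) (2 / Fintype.card ι)
      ≤ (α * Fintype.card ι + 1) * (∑ i, β i)
        * ∏ i, gammaMoment α (β i) (1 / Fintype.card ι) := by
  have hΓ := natCast_mul_Gamma_add_two_div_pow_le hα (Fintype.card_pos (α := ι))
  set n := Fintype.card ι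
  set g := (∏ i, β i) ^ ((1 : ℝ) / n)
  have hg0 : 0 ≤ g := rpow_nonneg (Finset.prod_nonneg fun i _ => hβ i) _
  have hg : n * g ≤ ∑ i, β i := by
    rw [mul_comm, ← le_div_iff₀ (by positivity)]
    exact prod_rpow_one_div_card_le hβ
  have hsq : (∏ i, β i) ^ ((2 : ℝ) / n) = g ^ 2 := by
    rw [← rpow_natCast, ← rpow_mul (Finset.prod_nonneg fun i _ => hβ i)]
    ring_nf
  rw [prod_gammaMoment hβ, prod_gammaMoment hβ, hsq]
  calc (n : ℝ) ^ 2 * (g ^ 2 * (Gamma (α + 2 / n) / Gamma α) ^ n)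
      = (n * g) * g * (n * (Gamma (α + 2 / n) / Gamma α) ^ n) := by ring
    _ ≤ (∑ i, β i) * g * ((α * n + 1) * (Gamma (α + 1 / n) / Gamma α) ^ n) := by
        gcongr
        exact mul_nonneg (Finset.sum_nonneg fun i _ => hβ i) hg0
    _ = (α * n + 1) * (∑ i, β i) * (g * (Gamma (α + 1 / n) / Gamma α) ^ n) := by ring

section GammaMeasure

variable {a r : ℝ}

lemma gammaMeasure_eq_withDensity_restrict (a r : ℝ) :
    gammaMeasure a r = (volume.restrict (Ici 0)).withDensity
      fun x => ENNReal.ofReal (r ^ a / Gamma a * x ^ (a - 1) * exp (-(r * x))) := by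
  rw [gammaMeasure, ← withDensity_indicator measurableSet_Ici]
  congr with x
  by_cases hx : 0 ≤ x <;> simp [gammaPDF, gammaPDFReal, hx]

lemma ae_restrict_toReal_gammaDensity (ha : 0 < a) (hr : 0 < r) :
    ∀ᵐ x ∂volume.restrict (Ici (0 : ℝ)),
      (ENNReal.ofReal (r ^ a / Gamma a * x ^ (a - 1) * exp (-(r * x)))).toReal
        = r ^ a / Gamma a * x ^ (a - 1) * exp (-(r * x)) := by
  filter_upwards [ae_restrict_mem measurableSet_Ici] with x (hx : 0 ≤ x)
  have := Gamma_pos_of_pos ha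
  exact ENNReal.toReal_ofReal (by positivity)

lemma integral_gammaMeasure (ha : 0 < a) (hr : 0 < r) (g : ℝ → ℝ) :
    ∫ x, g x ∂gammaMeasure a r
      = ∫ x in Ioi 0, r ^ a / Gamma a * x ^ (a - 1) * exp (-(r * x)) * g x := by
  rw [gammaMeasure_eq_withDensity_restrict, integral_withDensity_eq_integral_toReal_smul
    (by fun_prop) (ae_of_all _ fun _ => ENNReal.ofReal_lt_top), ← integral_Ici_eq_integral_Ioi]
  refine integral_congr_ae ?_
  filter_upwards [ae_restrict_toReal_gammaDensity ha hr] with x hx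
  rw [hx, smul_eq_mul]

lemma integrable_gammaMeasure_iff (ha : 0 < a) (hr : 0 < r) {g : ℝ → ℝ} :
    Integrable g (gammaMeasure a r) ↔
      IntegrableOn (fun x => r ^ a / Gamma a * x ^ (a - 1) * exp (-(r * x)) * g x) (Ioi 0) := by
  rw [gammaMeasure_eq_withDensity_restrict, integrable_withDensity_iff (by fun_prop)
    (ae_of_all _ fun _ => ENNReal.ofReal_lt_top), ← integrableOn_Ici_iff_integrableOn_Ioi]
  refine integrable_congr ?_
  filter_upwards [ae_restrict_toReal_gammaDensity ha hr] with x hx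
  rw [hx, mul_comm]

lemma integral_rpow_gammaMeasure (ha : 0 < a) (hr : 0 < r) {s : ℝ} (hs : 0 < a + s) :
    ∫ x, x ^ s ∂gammaMeasure a r = Gamma (a + s) / (Gamma a * r ^ s) := by
  have hΓ := (Gamma_pos_of_pos ha).ne'
  rw [integral_gammaMeasure ha hr]
  calc ∫ x in Ioi 0, r ^ a / Gamma a * x ^ (a - 1) * exp (-(r * x)) * x ^ s
      = ∫ x in Ioi 0, r ^ a / Gamma a * (x ^ (a + s - 1) * exp (-(r * x))) := by
        refine setIntegral_congr_fun measurableSet_Ioi fun x (hx : 0 < x) => ?_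
        rw [show a + s - 1 = (a - 1) + s by ring, rpow_add hx]
        ring
    _ = Gamma (a + s) / (Gamma a * r ^ s) := by
        rw [integral_const_mul, integral_rpow_mul_exp_neg_mul_Ioi hs hr,
          div_rpow zero_le_one hr.le, one_rpow, rpow_add hr]
        field_simp

lemma integrable_rpow_gammaMeasure (ha : 0 < a) (hr : 0 < r) {s : ℝ} (hs : 0 < a + s) :
    Integrable (fun x => x ^ s) (gammaMeasure a r) := by
  rw [integrable_gammaMeasure_iff ha hr]
  refine IntegrableOn.congr_fun ((integrableOn_rpow_mul_exp_neg_mul_rpow (s := a + s - 1)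
    (by linarith) one_pos hr).const_mul (r ^ a / Gamma a)) (fun x (hx : 0 < x) => ?_)
    measurableSet_Ioi
  rw [show a + s - 1 = (a - 1) + s by ring, rpow_add hx, rpow_one]
  ring_nf

lemma ae_nonneg_gammaMeasure : ∀ᵐ x ∂gammaMeasure a r, 0 ≤ x := by
  rw [gammaMeasure_eq_withDensity_restrict]
  exact (withDensity_absolutelyContinuous _ _).ae_le (ae_restrict_mem measurableSet_Ici)

lemma memLp_two_gammaMeasure (ha : 0 < a) (hr : 0 < r) : MemLp id 2 (gammaMeasure a r) := by
  rw [memLp_two_iff_integrable_sq aestronglyMeasurable_id]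
  simpa using integrable_rpow_gammaMeasure ha hr (s := 2) (by linarith)

end GammaMeasure

section GammaRandomVariable

variable {Ω : Type*} [MeasurableSpace Ω] {μ : Measure Ω} {α β : ℝ} {Y : Ω → ℝ}

lemma ae_nonneg_of_map_eq_gammaMeasure (hY : AEMeasurable Y μ)
    (hlaw : μ.map Y = gammaMeasure α β) : ∀ᵐ ω ∂μ, 0 ≤ Y ω :=
  ae_of_ae_map hY (hlaw ▸ ae_nonneg_gammaMeasure)

lemma memLp_two_of_map_eq_gammaMeasure (hα : 0 < α) (hβ : 0 < β) (hY : AEMeasurable Y μ)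
    (hlaw : μ.map Y = gammaMeasure α β) : MemLp Y 2 μ :=
  (memLp_map_measure_iff aestronglyMeasurable_id hY).1 (hlaw ▸ memLp_two_gammaMeasure hα hβ)

lemma integral_rpow_of_map_eq_gammaMeasure (hα : 0 < α) (hβ : 0 < β) (hY : AEMeasurable Y μ)
    (hlaw : μ.map Y = gammaMeasure α (1 / β)) {s : ℝ} (hs : 0 < α + s) :
    ∫ ω, Y ω ^ s ∂μ = gammaMoment α β s := by
  rw [← integral_map (f := fun x : ℝ => x ^ s) hY (by fun_prop), hlaw,
    integral_rpow_gammaMeasure hα (by positivity) hs, one_div, inv_rpow hβ.le, gammaMoment]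
  field_simp

end GammaRandomVariable

section IndependentGamma

variable {Ω : Type*} [MeasurableSpace Ω] {μ : Measure Ω} {ι : Type*} [Fintype ι] {α : ℝ}
  {β : ι → ℝ} {X : ι → Ω → ℝ}

lemma ae_forall_nonneg_of_map_eq_gammaMeasure (hX : ∀ i, AEMeasurable (X i) μ)
    (hlaw : ∀ i, μ.map (X i) = gammaMeasure α (β i)) : ∀ᵐ ω ∂μ, ∀ i, 0 ≤ X i ω :=
  ae_all_iff.2 fun i => ae_nonneg_of_map_eq_gammaMeasure (hX i) (hlaw i)

lemma integral_prod_rpow_of_iIndepFun (hα : 0 < α) (hβ : ∀ i, 0 < β i)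
    (hX : ∀ i, AEMeasurable (X i) μ) (hindep : iIndepFun X μ)
    (hlaw : ∀ i, μ.map (X i) = gammaMeasure α (1 / β i)) {e : ι → ℝ}
    (he : ∀ i, 0 < α + e i) :
    ∫ ω, ∏ i, X i ω ^ e i ∂μ = ∏ i, gammaMoment α (β i) (e i) := by
  rw [hindep.integral_fun_prod_comp (f := fun i x => x ^ e i) hX fun i => by fun_prop]
  exact Finset.prod_congr rfl fun i _ =>
    integral_rpow_of_map_eq_gammaMeasure hα (hβ i) (hX i) (hlaw i) (he i)

lemma integral_rpow_prod_of_iIndepFun (hα : 0 < α) (hβ : ∀ i, 0 < β i)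
    (hX : ∀ i, AEMeasurable (X i) μ) (hindep : iIndepFun X μ)
    (hlaw : ∀ i, μ.map (X i) = gammaMeasure α (1 / β i)) {t : ℝ} (ht : 0 < α + t) :
    ∫ ω, (∏ i, X i ω) ^ t ∂μ = ∏ i, gammaMoment α (β i) t := by
  rw [← integral_prod_rpow_of_iIndepFun hα hβ hX hindep hlaw fun _ => ht]
  refine integral_congr_ae ?_
  filter_upwards [ae_forall_nonneg_of_map_eq_gammaMeasure hX hlaw] with ω hω
  exact (finsetProd_rpow _ _ (fun i _ => hω i) t).symm

lemma integral_rpow_prod_mul_of_iIndepFun (hα : 0 < α) (hβ : ∀ i, 0 < β i)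
    (hX : ∀ i, AEMeasurable (X i) μ) (hindep : iIndepFun X μ)
    (hlaw : ∀ i, μ.map (X i) = gammaMeasure α (1 / β i)) {t : ℝ} (ht : 0 ≤ t) (i : ι) :
    ∫ ω, (∏ j, X j ω) ^ t * X i ω ∂μ = β i * (α + t) * ∫ ω, (∏ j, X j ω) ^ t ∂μ := by
  classical
  have hαt : 0 < α + t := by linarith
  rw [integral_rpow_prod_of_iIndepFun hα hβ hX hindep hlaw hαt,
    ← prod_apply_add_ite_eq_mul (f := fun j s => gammaMoment α (β j) s)
      (gammaMoment_add_one (hβ i).ne' hαt.ne'),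
    ← integral_prod_rpow_of_iIndepFun hα hβ hX hindep hlaw fun j => by split_ifs <;> linarith]
  refine integral_congr_ae ?_
  filter_upwards [ae_forall_nonneg_of_map_eq_gammaMeasure hX hlaw] with ω hω
  rw [prod_apply_add_ite_eq_mul (f := fun j s => X j ω ^ s)
      ((rpow_add_one' (hω i) (by linarith)).trans (mul_comm _ _)),
    finsetProd_rpow _ _ (fun j _ => hω j), mul_comm]

lemma integral_rpow_prod_sq_of_iIndepFun (hα : 0 < α) (hβ : ∀ i, 0 < β i)
    (hX : ∀ i, AEMeasurable (X i) μ) (hindep : iIndepFun X μ)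
    (hlaw : ∀ i, μ.map (X i) = gammaMeasure α (1 / β i)) {t : ℝ} (ht : 0 ≤ t) :
    ∫ ω, ((∏ i, X i ω) ^ t) ^ 2 ∂μ = ∏ i, gammaMoment α (β i) (2 * t) := by
  rw [← integral_prod_rpow_of_iIndepFun hα hβ hX hindep hlaw fun _ => by linarith]
  refine integral_congr_ae ?_
  filter_upwards [ae_forall_nonneg_of_map_eq_gammaMeasure hX hlaw] with ω hω
  rw [← rpow_natCast, ← rpow_mul (Finset.prod_nonneg fun i _ => hω i),
    finsetProd_rpow _ _ (fun i _ => hω i), Nat.cast_ofNat, mul_comm]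

end IndependentGamma

section SquareIntegrable

variable {Ω : Type*} [MeasurableSpace Ω] {μ : Measure Ω}

lemma memLp_prod_rpow_one_div_card {ι : Type*} [Fintype ι] [Nonempty ι] {X : ι → Ω → ℝ}
    {q : ENNReal} (hX : ∀ i, MemLp (X i) q μ) (hX0 : ∀ᵐ ω ∂μ, ∀ i, 0 ≤ X i ω) :
    MemLp (fun ω => (∏ i, X i ω) ^ ((1 : ℝ) / Fintype.card ι)) q μ := by
  refine ((memLp_finsetSum Finset.univ fun i _ => hX i).const_mul (Fintype.card ι : ℝ)⁻¹).mono
    ((Finset.aemeasurable_fun_prod _ fun i _ => (hX i).1.aemeasurable).pow_const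
      _).aestronglyMeasurable ?_
  filter_upwards [hX0] with ω hω
  have hsum : 0 ≤ ∑ i, X i ω := Finset.sum_nonneg fun i _ => hω i
  rw [norm_of_nonneg (rpow_nonneg (Finset.prod_nonneg fun i _ => hω i) _),
    norm_of_nonneg (by positivity), ← div_eq_inv_mul]
  exact prod_rpow_one_div_card_le hω

lemma integral_sum_sq_add_mul_sub [IsFiniteMeasure μ] {ι : Type*} [Fintype ι]
    {Y : ι → Ω → ℝ} {V : Ω → ℝ} (hY : ∀ i, MemLp (Y i) 2 μ) (hV : MemLp V 2 μ)
    (b : ι → ℝ) (c : ℝ) :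
    ∫ ω, ∑ i, (Y i ω + c * V ω - b i) ^ 2 ∂μ
      = ∫ ω, ∑ i, (Y i ω - b i) ^ 2 ∂μ
        + ∑ i, (2 * c * (∫ ω, V ω * Y i ω ∂μ - b i * ∫ ω, V ω ∂μ)
          + c ^ 2 * ∫ ω, V ω ^ 2 ∂μ) := by
  have hV1 : Integrable V μ := hV.integrable one_le_two
  have hVY i : Integrable (fun ω => V ω * Y i ω) μ := hV.integrable_mul (hY i)
  have hVYb i : Integrable (fun ω => V ω * Y i ω - b i * V ω) μ :=
    (hVY i).sub (hV1.const_mul (b i))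
  have hcorr i :
      Integrable (fun ω => 2 * c * (V ω * Y i ω - b i * V ω) + c ^ 2 * V ω ^ 2) μ :=
    ((hVYb i).const_mul (2 * c)).add (hV.integrable_sq.const_mul (c ^ 2))
  have hYb i : Integrable (fun ω => (Y i ω - b i) ^ 2) μ :=
    ((hY i).sub (memLp_const (b i))).integrable_sq
  calc ∫ ω, ∑ i, (Y i ω + c * V ω - b i) ^ 2 ∂μ
      = ∫ ω, (∑ i, (Y i ω - b i) ^ 2
          + ∑ i, (2 * c * (V ω * Y i ω - b i * V ω) + c ^ 2 * V ω ^ 2)) ∂μ := by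
        congr with ω
        rw [← Finset.sum_add_distrib]
        exact Finset.sum_congr rfl fun i _ => by ring
    _ = _ := by
        rw [integral_add (integrable_finsetSum _ fun i _ => hYb i)
            (integrable_finsetSum _ fun i _ => hcorr i), integral_finsetSum _ fun i _ => hcorr i]
        congr 1
        refine Finset.sum_congr rfl fun i _ => ?_
        rw [integral_add ((hVYb i).const_mul _) (hV.integrable_sq.const_mul _),
          integral_const_mul, integral_const_mul, integral_sub (hVY i) (hV1.const_mul _),
          integral_const_mul]

end SquareIntegrable

lemma sum_shrinkage_gain_nonpos {ι : Type*} [Fintype ι] {β : ι → ℝ} {α c A B : ℝ}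
    (hn : 1 ≤ Fintype.card ι) (hα : 0 < α) (hβ : ∀ i, 0 ≤ β i) (hA : 0 ≤ A) (hc0 : 0 ≤ c)
    (hc : c ≤ 2 * ((Fintype.card ι : ℝ) - 1) / ((α + 1) * (α * Fintype.card ι + 1)))
    (hB : (Fintype.card ι : ℝ) ^ 2 * B ≤ (α * Fintype.card ι + 1) * (∑ i, β i) * A) :
    ∑ i, (2 * c * (β i * (α + 1 / Fintype.card ι) * A / (α + 1) - β i * A) + c ^ 2 * B)
      ≤ 0 := by
  set n : ℝ := (Fintype.card ι : ℝ)
  have hn : (1 : ℝ) ≤ n := Nat.one_le_cast.2 hn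
  have hS : 0 ≤ ∑ i, β i := Finset.sum_nonneg fun i _ => hβ i
  have hc' : c * (α * n + 1) ≤ 2 * (n - 1) / (α + 1) := by
    rw [le_div_iff₀ (by positivity)] at hc ⊢
    linarith
  have hsum : ∑ i, (2 * c * (β i * (α + 1 / n) * A / (α + 1) - β i * A) + c ^ 2 * B)
      = n * c ^ 2 * B - 2 * c * A * (n - 1) / (n * (α + 1)) * ∑ i, β i := by
    have hterm i : 2 * c * (β i * (α + 1 / n) * A / (α + 1) - β i * A)
        = -(2 * c * A * (n - 1) / (n * (α + 1)) * β i) := by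
      field_simp
      ring
    rw [Finset.sum_add_distrib, Finset.sum_congr rfl fun i _ => hterm i, Finset.sum_neg_distrib,
      Finset.sum_const, Finset.card_univ, nsmul_eq_mul, Finset.mul_sum]
    ring
  rw [hsum, sub_nonpos]
  calc n * c ^ 2 * B = c ^ 2 / n * (n ^ 2 * B) := by field_simp
    _ ≤ c ^ 2 / n * ((α * n + 1) * (∑ i, β i) * A) := by gcongr
    _ = c * (α * n + 1) * (c * A * (∑ i, β i) / n) := by ring
    _ ≤ 2 * (n - 1) / (α + 1) * (c * A * (∑ i, β i) / n) := by gcongr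
    _ = 2 * c * A * (n - 1) / (n * (α + 1)) * ∑ i, β i := by field_simp

/-- Let `p ≥ 2`, `α > 0`, and `X₁, …, X_p` independent with
`X_i ~ Gamma(α, β_i)` (shape `α`, scale `β_i`, i.e. rate `1/β_i`). With
`β̂_i⁰ = X_i/(α+1)` and `β̂_i^JS = β̂_i⁰ + cV`, `V = (∏ X_j)^{1/p}`, if
`c ∈ [0, 2(p−1)/((α+1)(αp+1))]` then the shrinkage estimator dominates the naive
estimator in total mean squared risk. -/
theorem stmt_1 {Ω : Type*} [MeasureSpace Ω] [IsProbabilityMeasure (ℙ : Measure Ω)]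
    (p : ℕ) (hp : 2 ≤ p) (α : ℝ) (hα : 0 < α) (β : Fin p → ℝ) (hβ : ∀ i, 0 < β i)
    (X : Fin p → Ω → ℝ) (hX : ∀ i, Measurable (X i))
    (hindep : iIndepFun X ℙ)
    (hlaw : ∀ i, Measure.map (X i) ℙ = gammaMeasure α (1 / β i))
    (c : ℝ) (hc : c ∈ Set.Icc 0 (2 * ((p : ℝ) - 1) / ((α + 1) * (α * p + 1)))) :
    ∫ ω, ∑ i, (X i ω / (α + 1) + c * (∏ j, X j ω) ^ ((1 : ℝ) / p) - β i) ^ 2 ∂ℙ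
      ≤ ∫ ω, ∑ i, (X i ω / (α + 1) - β i) ^ 2 ∂ℙ := by
  have : Nonempty (Fin p) := ⟨⟨0, by omega⟩⟩
  have hXm : ∀ i, AEMeasurable (X i) ℙ := fun i => (hX i).aemeasurable
  have hXL2 i : MemLp (X i) 2 ℙ :=
    memLp_two_of_map_eq_gammaMeasure hα (one_div_pos.2 (hβ i)) (hXm i) (hlaw i)
  have hVL2 : MemLp (fun ω => (∏ j, X j ω) ^ ((1 : ℝ) / p)) 2 ℙ := by
    simpa using memLp_prod_rpow_one_div_card hXL2
      (ae_forall_nonneg_of_map_eq_gammaMeasure hXm hlaw)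
  have hVX i : ∫ ω, (∏ j, X j ω) ^ ((1 : ℝ) / p) * (X i ω / (α + 1)) ∂ℙ
      = β i * (α + 1 / p) * (∫ ω, (∏ j, X j ω) ^ ((1 : ℝ) / p) ∂ℙ) / (α + 1) := by
    simp_rw [mul_div_assoc', integral_div]
    rw [integral_rpow_prod_mul_of_iIndepFun hα hβ hXm hindep hlaw (by positivity)]
  have hV2 : (p : ℝ) ^ 2 * ∫ ω, ((∏ j, X j ω) ^ ((1 : ℝ) / p)) ^ 2 ∂ℙ
      ≤ (α * p + 1) * (∑ i, β i) * ∫ ω, (∏ j, X j ω) ^ ((1 : ℝ) / p) ∂ℙ := by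
    rw [integral_rpow_prod_sq_of_iIndepFun hα hβ hXm hindep hlaw (by positivity),
      integral_rpow_prod_of_iIndepFun hα hβ hXm hindep hlaw (by positivity), mul_one_div]
    simpa using natCast_sq_mul_prod_gammaMoment_le hα fun i => (hβ i).le
  have hV : 0 ≤ ∫ ω, (∏ j, X j ω) ^ ((1 : ℝ) / p) ∂ℙ := by
    rw [integral_rpow_prod_of_iIndepFun hα hβ hXm hindep hlaw (by positivity)]
    exact Finset.prod_nonneg fun i _ => by unfold gammaMoment; have := hβ i; positivity
  rw [integral_sum_sq_add_mul_sub (Y := fun i ω => X i ω / (α + 1))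
      (fun i => by simpa only [div_eq_mul_inv] using (hXL2 i).mul_const (α + 1)⁻¹) hVL2,
    add_le_iff_nonpos_right]
  simp only [hVX]
  simpa using sum_shrinkage_gain_nonpos (β := β) (by simp; omega) hα (fun i => (hβ i).le) hV
    hc.1 (by simpa using hc.2) (by simpa using hV2)
end

section
/- Let p ≥ 1, α > 0, and let (X₁, …, X_p) be a random vector of positive random variables (not necessarily independent) such that each marginal X_i has the Gamma(α, β_i) distribution with scale β_i > 0, and (∏_{i=1}^p X_i)^{1/p} is integrable. Then E[(∏_{i=1}^p X_i)^{1/p}] ≥ α · exp(−1/α) · (∏_{i=1}^p β_i)^{1/p}. -/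
/-!
Where all `X i` are positive, the geometric mean is `exp ((1/p) ∑ log X i)`, so Jensen's inequality
for `exp` bounds its expectation below by `exp ((1/p) ∑ E[log X i])`, whatever the joint law.
For `X ∼ Gamma(a, rate r)`, Jensen applied to `X ^ s = exp (s log X)` with `s < 0` and the moment
formula `E[X ^ s] = Γ(a+s) / (Γ(a) r ^ s)` give `E[log X] ≥ (log Γ(a+s) - log Γ(a)) / s - log r`.
Convexity of `log ∘ Γ` and `Γ(x+1) = x Γ(x)` bound this slope below by `log a - 1/(a+s)`, and
letting `s → 0⁻` yields `E[log X] ≥ log a - 1/a - log r`: the digamma bound, without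
differentiating `Γ`.
-/

open MeasureTheory ProbabilityTheory Real Set Filter Topology

lemma exp_mul_integral_log_le_integral_rpow {Ω : Type*} [MeasurableSpace Ω] {μ : Measure Ω}
    [IsProbabilityMeasure μ] {Y : Ω → ℝ} (c : ℝ) (hpos : ∀ᵐ ω ∂μ, 0 < Y ω)
    (hlog : Integrable (fun ω => log (Y ω)) μ) (hint : Integrable (fun ω => Y ω ^ c) μ) :
    exp (c * ∫ ω, log (Y ω) ∂μ) ≤ ∫ ω, Y ω ^ c ∂μ := by
  have hexp : (fun ω => Y ω ^ c) =ᵐ[μ] fun ω => exp (c * log (Y ω)) := by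
    filter_upwards [hpos] with ω hω
    rw [rpow_def_of_pos hω, mul_comm]
  rw [← integral_const_mul, integral_congr_ae hexp]
  exact convexOn_exp.map_integral_le continuous_exp.continuousOn isClosed_univ
    (ae_of_all _ fun _ => mem_univ _) (hlog.const_mul c) (hint.congr hexp)

lemma abs_le_exp_add_exp_neg (y : ℝ) : |y| ≤ exp y + exp (-y) := by
  have := add_one_le_exp y
  have := add_one_le_exp (-y)
  rw [abs_le]
  constructor <;> linarith [exp_pos y, exp_pos (-y)]

lemma log_sub_inv_le_slope_logGamma {a s : ℝ} (has : 0 < a + s) (hs1 : -1 < s) (hs0 : s < 0) :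
    log a - (a + s)⁻¹ ≤ (log (Gamma (a + s)) - log (Gamma a)) / s := by
  have ha : 0 < a := by linarith
  have hlogΓ : ∀ {x : ℝ}, 0 < x → log (Gamma (x + 1)) = log x + log (Gamma x) := fun hx => by
    rw [Gamma_add_one hx.ne', log_mul hx.ne' (Gamma_pos_of_pos hx).ne']
  -- the slope of `log ∘ Γ` on `[a, a+1]` is `log a`; compare it with the slope on `[a+s+1, a+1]`
  have hsecant := convexOn_log_Gamma.secant_mono (a := a + 1) (x := a) (y := a + s + 1)
    (by simp; linarith) ha (by simp; linarith) (by linarith) (by linarith) (by linarith)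
  simp only [Function.comp_apply, hlogΓ ha, hlogΓ has] at hsecant
  rw [show a - (a + 1) = -1 by ring, show a + s + 1 - (a + 1) = s by ring, le_div_iff_of_neg hs0,
    div_neg, div_one] at hsecant
  have hlog : log a - log (a + s) ≤ -(s * (a + s)⁻¹) := by
    rw [← log_div ha.ne' has.ne']
    convert log_le_sub_one_of_pos (div_pos ha has) using 1
    field_simp
    ring
  rw [le_div_iff_of_neg hs0]
  linarith

namespace ProbabilityTheory

variable {a r s : ℝ}

lemma ae_pos_gammaMeasure : ∀ᵐ x ∂gammaMeasure a r, 0 < x := by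
  have hIic : {x : ℝ | ¬0 < x} = Iic 0 := by ext; simp
  rw [ae_iff, hIic, gammaMeasure, withDensity_apply _ measurableSet_Iic,
    setLIntegral_congr Iio_ae_eq_Iic.symm, lintegral_gammaPDF_of_nonpos le_rfl]

lemma gammaMeasure_eq_withDensity_restrict_Ioi :
    gammaMeasure a r = (volume.restrict (Ioi 0)).withDensity (gammaPDF a r) := by
  rw [← restrict_withDensity measurableSet_Ioi, ← gammaMeasure]
  exact (Measure.restrict_eq_self_of_ae_mem ae_pos_gammaMeasure).symm

lemma measurable_gammaPDF (a r : ℝ) : Measurable (gammaPDF a r) :=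
  (measurable_gammaPDFReal a r).ennreal_ofReal

lemma toReal_gammaPDF (ha : 0 < a) (hr : 0 < r) (x : ℝ) :
    (gammaPDF a r x).toReal = gammaPDFReal a r x :=
  ENNReal.toReal_ofReal (gammaPDFReal_nonneg ha hr x)

lemma integral_gammaMeasure (ha : 0 < a) (hr : 0 < r) (g : ℝ → ℝ) :
    ∫ x, g x ∂gammaMeasure a r = ∫ x in Ioi 0, gammaPDFReal a r x * g x := by
  rw [gammaMeasure_eq_withDensity_restrict_Ioi, integral_withDensity_eq_integral_toReal_smul
    (measurable_gammaPDF a r) (ae_of_all _ fun _ => ENNReal.ofReal_lt_top)]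
  simp only [toReal_gammaPDF ha hr, smul_eq_mul]

lemma gammaPDFReal_mul_rpow {x : ℝ} (hx : 0 < x) :
    gammaPDFReal a r x * x ^ s = r ^ a / Gamma a * (x ^ (a + s - 1) * exp (-(r * x))) := by
  rw [gammaPDFReal, if_pos hx.le, show a + s - 1 = a - 1 + s by ring, rpow_add hx]
  ring

lemma integral_rpow_gammaMeasure (ha : 0 < a) (hr : 0 < r) (hs : 0 < a + s) :
    ∫ x, x ^ s ∂gammaMeasure a r = Gamma (a + s) / (Gamma a * r ^ s) := by
  rw [integral_gammaMeasure ha hr, setIntegral_congr_fun measurableSet_Ioi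
    fun x hx => gammaPDFReal_mul_rpow hx, integral_const_mul,
    integral_rpow_mul_exp_neg_mul_Ioi hs hr, div_rpow zero_le_one hr.le, one_rpow, rpow_add hr]
  have := (Gamma_pos_of_pos ha).ne'
  have := (rpow_pos_of_pos hr a).ne'
  field_simp

lemma integrable_rpow_gammaMeasure (ha : 0 < a) (hr : 0 < r) (hs : 0 < a + s) :
    Integrable (fun x => x ^ s) (gammaMeasure a r) := by
  refine Integrable.of_integral_ne_zero ?_
  rw [integral_rpow_gammaMeasure ha hr hs]
  have := Gamma_pos_of_pos hs
  have := Gamma_pos_of_pos ha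
  positivity

lemma integrable_log_gammaMeasure (ha : 0 < a) (hr : 0 < r) :
    Integrable log (gammaMeasure a r) := by
  have ht : 0 < a / 2 := half_pos ha
  have hdom : Integrable (fun x => (x ^ (a / 2) + x ^ (-(a / 2))) / (a / 2)) (gammaMeasure a r) :=
    ((integrable_rpow_gammaMeasure ha hr (by linarith)).add
      (integrable_rpow_gammaMeasure ha hr (by linarith))).div_const _
  refine hdom.mono' measurable_log.aestronglyMeasurable ?_
  filter_upwards [ae_pos_gammaMeasure] with x hx
  have := abs_le_exp_add_exp_neg (log x * (a / 2))
  rw [← mul_neg, ← rpow_def_of_pos hx, ← rpow_def_of_pos hx, abs_mul, abs_of_pos ht] at this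
  rwa [Real.norm_eq_abs, le_div_iff₀ ht]

lemma slope_logGamma_sub_log_le_integral_log_gammaMeasure (ha : 0 < a) (hr : 0 < r)
    (has : 0 < a + s) (hs0 : s < 0) :
    (log (Gamma (a + s)) - log (Gamma a)) / s - log r ≤ ∫ x, log x ∂gammaMeasure a r := by
  have := isProbabilityMeasure_gammaMeasure ha hr
  have hjensen := exp_mul_integral_log_le_integral_rpow s ae_pos_gammaMeasure
    (integrable_log_gammaMeasure ha hr) (integrable_rpow_gammaMeasure ha hr has)
  have hΓa := Gamma_pos_of_pos ha
  have hΓas := Gamma_pos_of_pos has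
  have hrs := rpow_pos_of_pos hr s
  rw [integral_rpow_gammaMeasure ha hr has, ← le_log_iff_exp_le (by positivity),
    log_div hΓas.ne' (by positivity), log_mul hΓa.ne' hrs.ne', log_rpow hr] at hjensen
  rw [sub_le_iff_le_add, div_le_iff_of_neg hs0]
  linarith

lemma log_sub_inv_sub_log_le_integral_log_gammaMeasure (ha : 0 < a) (hr : 0 < r) :
    log a - a⁻¹ - log r ≤ ∫ x, log x ∂gammaMeasure a r := by
  have hlim : Tendsto (fun s => log a - (a + s)⁻¹ - log r) (𝓝[<] 0) (𝓝 (log a - a⁻¹ - log r)) := by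
    have : ContinuousAt (fun s => log a - (a + s)⁻¹ - log r) 0 := by
      fun_prop (disch := simp [ha.ne'])
    simpa using this.tendsto.mono_left nhdsWithin_le_nhds
  refine le_of_tendsto hlim ?_
  filter_upwards [Ioo_mem_nhdsLT (show max (-a) (-1) < 0 by simp [ha])] with s ⟨hs, hs0⟩
  rw [max_lt_iff] at hs
  have has : 0 < a + s := by linarith
  linarith [log_sub_inv_le_slope_logGamma has hs.2 hs0,
    slope_logGamma_sub_log_le_integral_log_gammaMeasure ha hr has hs0]

end ProbabilityTheory

/-- Let `p ≥ 1`, `α > 0`, and `(X₁, …, X_p)` a random vector of a.s. positive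
random variables (not necessarily independent) whose marginals are `Gamma(α, β_i)` (shape `α`,
scale `β_i`, i.e. rate `1/β_i`), with integrable geometric mean. Then
`E[(∏ X_i)^{1/p}] ≥ α exp(−1/α) (∏ β_i)^{1/p}`. -/
theorem stmt_13 {Ω : Type*} [MeasureSpace Ω] [IsProbabilityMeasure (ℙ : Measure Ω)]
    (p : ℕ) (hp : 1 ≤ p) (α : ℝ) (hα : 0 < α) (β : Fin p → ℝ) (hβ : ∀ i, 0 < β i)
    (X : Fin p → Ω → ℝ) (hX : ∀ i, Measurable (X i))
    (hpos : ∀ᵐ ω ∂ℙ, ∀ i, 0 < X i ω)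
    (hlaw : ∀ i, Measure.map (X i) ℙ = gammaMeasure α (1 / β i))
    (hint : Integrable (fun ω => (∏ i, X i ω) ^ ((1 : ℝ) / p)) ℙ) :
    α * Real.exp (-1 / α) * (∏ i, β i) ^ ((1 : ℝ) / p)
      ≤ ∫ ω, (∏ i, X i ω) ^ ((1 : ℝ) / p) ∂ℙ := by
  have hp0 : (p : ℝ) ≠ 0 := Nat.cast_ne_zero.2 (Nat.one_le_iff_ne_zero.1 hp)
  have hr i : 0 < 1 / β i := one_div_pos.2 (hβ i)
  have hlog i : Integrable (fun ω => log (X i ω)) ℙ :=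
    (integrable_map_measure measurable_log.aestronglyMeasurable (hX i).aemeasurable).1
      (hlaw i ▸ integrable_log_gammaMeasure hα (hr i))
  have hElog i : log α - α⁻¹ + log (β i) ≤ ∫ ω, log (X i ω) ∂ℙ := by
    have := log_sub_inv_sub_log_le_integral_log_gammaMeasure hα (hr i)
    rwa [← hlaw i, integral_map (hX i).aemeasurable measurable_log.aestronglyMeasurable, one_div,
      log_inv, sub_neg_eq_add] at this
  have hlogprod : (fun ω => log (∏ i, X i ω)) =ᵐ[ℙ] fun ω => ∑ i, log (X i ω) := by
    filter_upwards [hpos] with ω hω using log_prod fun i _ => (hω i).ne'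
  have hjensen := exp_mul_integral_log_le_integral_rpow (1 / p)
    (hpos.mono fun ω hω => Finset.prod_pos fun i _ => hω i)
    ((integrable_finsetSum _ fun i _ => hlog i).congr hlogprod.symm) hint
  rw [integral_congr_ae hlogprod, integral_finsetSum _ fun i _ => hlog i] at hjensen
  refine le_trans ?_ hjensen
  calc α * exp (-1 / α) * (∏ i, β i) ^ ((1 : ℝ) / p)
      = exp (1 / p * ∑ i, (log α - α⁻¹ + log (β i))) := by
        rw [rpow_def_of_pos (Finset.prod_pos fun i _ => hβ i), log_prod fun i _ => (hβ i).ne',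
          Finset.sum_add_distrib, Finset.sum_const, Finset.card_univ, Fintype.card_fin, nsmul_eq_mul,
          show 1 / (p : ℝ) * (p * (log α - α⁻¹) + ∑ i, log (β i))
            = log α + -1 / α + (∑ i, log (β i)) * (1 / p) by field_simp; ring,
          exp_add, exp_add, exp_log hα]
    _ ≤ exp (1 / p * ∑ i, ∫ ω, log (X i ω) ∂ℙ) := by gcongr with i; exact hElog i
end
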